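/- arXiv:2311.18163 — 4 statements merged into one kernel-verified Lean document; each statement's English description precedes it below -/
import Mathlib

section
/- Let U := {(x,y) ∈ ℝ × (0,∞) : |x| ≤ 1/2 and y > 2|x|}. For all real numbers x₁ ≠ x₂, the hyperbolic measure of the intersection of the two horizontal translates satisfies λ((U + x₁) ∩ (U + x₂)) = ln(1/min(|x₁ − x₂|, 1)). -/
open MeasureTheory

/-- The hyperbolic measure `λ(A) = ∬_A y⁻² dx dy` on the upper half-plane
`ℍ = {(x,y) : y > 0}`. -/
noncomputable def hypMeasure : Measure (ℝ × ℝ) :=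
  (volume.restrict {p : ℝ × ℝ | 0 < p.2}).withDensity fun p => ENNReal.ofReal (1 / p.2 ^ 2)

/-- The horizontal translate `A + t = {(x + t, y) : (x, y) ∈ A}`. -/
def htrans (A : Set (ℝ × ℝ)) (t : ℝ) : Set (ℝ × ℝ) := {p : ℝ × ℝ | (p.1 - t, p.2) ∈ A}

/-- The region `U := {(x,y) ∈ ℝ × (0,∞) : |x| ≤ 1/2 ∧ y > 2|x|}`. -/
def coneU : Set (ℝ × ℝ) := {p : ℝ × ℝ | |p.1| ≤ 1 / 2 ∧ 2 * |p.1| < p.2}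

lemma mem_htrans_coneU {p : ℝ × ℝ} {t : ℝ} :
    p ∈ htrans coneU t ↔ |p.1 - t| ≤ 1 / 2 ∧ 2 * |p.1 - t| < p.2 := Iff.rfl

lemma measurableSet_htrans_coneU (t : ℝ) : MeasurableSet (htrans coneU t) := by
  have : htrans coneU t
      = {p : ℝ × ℝ | |p.1 - t| ≤ 1 / 2} ∩ {p : ℝ × ℝ | 2 * |p.1 - t| < p.2} := rfl
  rw [this]
  exact (measurableSet_le ((measurable_fst.sub_const t).abs) measurable_const).inter
    (measurableSet_lt (((measurable_fst.sub_const t).abs).const_mul 2) measurable_snd)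

lemma lint_inv_sq {a : ℝ} (ha : 0 < a) :
    ∫⁻ y in Set.Ioi a, ENNReal.ofReal (1 / y ^ 2) = ENNReal.ofReal (1 / a) := by
  have heq : Set.EqOn (fun y : ℝ => y ^ (-2 : ℝ)) (fun y : ℝ => 1 / y ^ 2) (Set.Ioi a) := by
    intro x hx
    have hx0 : 0 < x := ha.trans hx
    simp only
    rw [Real.rpow_neg hx0.le, Real.rpow_two, one_div]
  have hint : IntegrableOn (fun y : ℝ => 1 / y ^ 2) (Set.Ioi a) :=
    (integrableOn_Ioi_rpow_of_lt (by norm_num : (-2 : ℝ) < -1) ha).congr_fun heq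
      measurableSet_Ioi
  rw [← ofReal_integral_eq_lintegral_ofReal hint
      (Filter.Eventually.of_forall fun y => by positivity)]
  congr 1
  rw [← setIntegral_congr_fun measurableSet_Ioi heq,
    integral_Ioi_rpow_of_lt (by norm_num) ha]
  norm_num [Real.rpow_neg_one]

lemma key_lt (x₁ x₂ : ℝ) (hlt : x₁ < x₂) (hle : x₂ - x₁ ≤ 1) :
    hypMeasure (htrans coneU x₁ ∩ htrans coneU x₂) =
      ENNReal.ofReal (Real.log (1 / min |x₁ - x₂| 1)) := by
  set d : ℝ := x₂ - x₁ with hd_def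
  have hd : 0 < d := by simp [hd_def]; linarith
  set a : ℝ := x₂ - 1 / 2 with ha_def
  set b : ℝ := x₁ + 1 / 2 with hb_def
  set m : ℝ := (x₁ + x₂) / 2 with hm_def
  have ham : a ≤ m := by rw [ha_def, hm_def]; linarith
  have hmb : m ≤ b := by rw [hm_def, hb_def]; linarith
  set g : ℝ → ℝ := fun x => max (2 * |x - x₁|) (2 * |x - x₂|) with hg_def
  have hg_lb : ∀ x, d ≤ g x := by
    intro x
    rcases le_or_gt x m with hx | hx
    · refine le_trans ?_ (le_max_right _ _)
      have : d ≤ 2 * (x₂ - x) := by rw [hd_def]; rw [hm_def] at hx; linarith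
      calc d ≤ 2 * (x₂ - x) := this
        _ ≤ 2 * |x - x₂| := by
            rw [abs_sub_comm]
            have := le_abs_self (x₂ - x); linarith
    · refine le_trans ?_ (le_max_left _ _)
      have : d ≤ 2 * (x - x₁) := by rw [hd_def]; rw [hm_def] at hx; linarith
      have h2 := le_abs_self (x - x₁); linarith
  have hg_pos : ∀ x, 0 < g x := fun x => hd.trans_le (hg_lb x)
  have hg_cont : Continuous g := by
    apply Continuous.max <;> fun_prop
  have hinv_cont : Continuous fun x => 1 / g x :=
    continuous_const.div hg_cont fun x => (hg_pos x).ne'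
  set S : Set (ℝ × ℝ) := htrans coneU x₁ ∩ htrans coneU x₂ with hS_def
  have hS : MeasurableSet S :=
    (measurableSet_htrans_coneU x₁).inter (measurableSet_htrans_coneU x₂)
  have hS_mem : ∀ p : ℝ × ℝ, p ∈ S ↔
      (|p.1 - x₁| ≤ 1 / 2 ∧ 2 * |p.1 - x₁| < p.2) ∧
      (|p.1 - x₂| ≤ 1 / 2 ∧ 2 * |p.1 - x₂| < p.2) := fun p => Iff.rfl
  have hS_pos : ∀ p ∈ S, 0 < p.2 := by
    intro p hp
    rw [hS_mem] at hp
    have h1 := hp.1.2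
    have h2 := hp.2.2
    have hmax : g p.1 < p.2 := max_lt h1 h2
    linarith [hg_lb p.1]
  -- reduce to a Lebesgue integral over ℝ²
  have step1 : hypMeasure S = ∫⁻ p in S, ENNReal.ofReal (1 / p.2 ^ 2) ∂volume := by
    rw [hypMeasure, withDensity_apply _ hS, Measure.restrict_restrict hS]
    congr 1
    rw [Set.inter_eq_left.mpr]
    exact fun p hp => hS_pos p hp
  set f : ℝ × ℝ → ENNReal := fun p => ENNReal.ofReal (1 / p.2 ^ 2) with hf_def
  have hf_meas : Measurable f := by
    apply Measurable.ennreal_ofReal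
    fun_prop
  have step2 : ∫⁻ p in S, f p ∂volume
      = ∫⁻ x : ℝ, ∫⁻ y : ℝ, S.indicator f (x, y) := by
    rw [← lintegral_indicator hS, Measure.volume_eq_prod,
      lintegral_prod _ ((hf_meas.indicator hS).aemeasurable)]
  have hIcc : ∀ x : ℝ, x ∈ Set.Icc a b ↔ |x - x₁| ≤ 1 / 2 ∧ |x - x₂| ≤ 1 / 2 := by
    intro x
    rw [Set.mem_Icc, ha_def, hb_def]
    constructor
    · rintro ⟨h1, h2⟩
      constructor <;> rw [abs_le] <;> constructor <;> linarith
    · rintro ⟨h1, h2⟩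
      rw [abs_le] at h1 h2
      exact ⟨by linarith [h2.1], by linarith [h1.2]⟩
  have step3 : ∀ x : ℝ, (∫⁻ y : ℝ, S.indicator f (x, y))
      = Set.indicator (Set.Icc a b) (fun x => ENNReal.ofReal (1 / g x)) x := by
    intro x
    by_cases hx : x ∈ Set.Icc a b
    · rw [Set.indicator_of_mem hx]
      obtain ⟨hx1, hx2⟩ := (hIcc x).mp hx
      have hsec : ∀ y : ℝ, S.indicator f (x, y)
          = (Set.Ioi (g x)).indicator (fun y => ENNReal.ofReal (1 / y ^ 2)) y := by
        intro y
        by_cases hy : y ∈ Set.Ioi (g x)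
        · rw [Set.indicator_of_mem hy]
          have hyS : (x, y) ∈ S := by
            rw [hS_mem]
            have hy' : g x < y := hy
            exact ⟨⟨hx1, lt_of_le_of_lt (le_max_left _ _) hy'⟩,
              ⟨hx2, lt_of_le_of_lt (le_max_right _ _) hy'⟩⟩
          rw [Set.indicator_of_mem hyS]
        · rw [Set.indicator_of_notMem hy, Set.indicator_of_notMem]
          intro hyS
          rw [hS_mem] at hyS
          exact hy (max_lt hyS.1.2 hyS.2.2)
      simp_rw [hsec]
      rw [lintegral_indicator measurableSet_Ioi]
      exact lint_inv_sq (hg_pos x)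
    · rw [Set.indicator_of_notMem hx]
      have : ∀ y : ℝ, S.indicator f (x, y) = 0 := by
        intro y
        apply Set.indicator_of_notMem
        intro hyS
        rw [hS_mem] at hyS
        exact hx ((hIcc x).mpr ⟨hyS.1.1, hyS.2.1⟩)
      simp [this]
  -- integrability of the outer integrand
  have hab : a ≤ b := ham.trans hmb
  have hint : IntegrableOn (fun x => 1 / g x) (Set.Icc a b) :=
    hinv_cont.integrableOn_Icc
  have step4 : (∫⁻ x : ℝ, Set.indicator (Set.Icc a b)
        (fun x => ENNReal.ofReal (1 / g x)) x)
      = ENNReal.ofReal (∫ x in Set.Icc a b, 1 / g x) := by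
    rw [lintegral_indicator measurableSet_Icc,
      ← ofReal_integral_eq_lintegral_ofReal hint
        (Filter.Eventually.of_forall fun x => by positivity)]
  -- compute the real integral
  have core : ∫ u in (d / 2)..(1 / 2), 1 / (2 * u) = 2⁻¹ * Real.log (1 / d) := by
    have : ∀ u : ℝ, 1 / (2 * u) = 2⁻¹ * u⁻¹ := by
      intro u; rw [one_div, mul_inv]
    simp_rw [this]
    rw [intervalIntegral.integral_const_mul, integral_inv_of_pos (half_pos hd) one_half_pos]
    congr 1
    rw [div_div_eq_mul_div, div_mul_eq_mul_div]
    norm_num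
  have hval : (∫ x in Set.Icc a b, 1 / g x) = Real.log (1 / d) := by
    rw [MeasureTheory.integral_Icc_eq_integral_Ioc, ← intervalIntegral.integral_of_le hab]
    have hsplit : (∫ x in a..m, 1 / g x) + ∫ x in m..b, 1 / g x = ∫ x in a..b, 1 / g x :=
      intervalIntegral.integral_add_adjacent_intervals
        (hinv_cont.intervalIntegrable a m) (hinv_cont.intervalIntegrable m b)
    rw [← hsplit]
    have h1 : ∫ x in a..m, 1 / g x = ∫ x in a..m, (fun u => 1 / (2 * u)) (x₂ - x) := by
      apply intervalIntegral.integral_congr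
      intro x hx
      rw [Set.uIcc_of_le ham, Set.mem_Icc] at hx
      have habs2 : |x - x₂| = x₂ - x := by
        rw [abs_sub_comm]
        exact abs_of_nonneg (by rw [hm_def] at hx; rw [ha_def] at hx; linarith [hx.2])
      have habs1 : |x - x₁| ≤ x₂ - x := by
        rw [abs_le]
        rw [hm_def] at hx; rw [ha_def] at hx
        constructor <;> linarith [hx.1, hx.2]
      simp only [hg_def]
      rw [habs2, max_eq_right (by linarith)]
    have h2 : ∫ x in m..b, 1 / g x = ∫ x in m..b, (fun u => 1 / (2 * u)) (x - x₁) := by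
      apply intervalIntegral.integral_congr
      intro x hx
      rw [Set.uIcc_of_le hmb, Set.mem_Icc] at hx
      have habs1 : |x - x₁| = x - x₁ :=
        abs_of_nonneg (by rw [hm_def] at hx; linarith [hx.1])
      have habs2 : |x - x₂| ≤ x - x₁ := by
        rw [abs_le]
        rw [hm_def] at hx; rw [hb_def] at hx
        constructor <;> linarith [hx.1, hx.2]
      simp only [hg_def]
      rw [habs1, max_eq_left (by linarith)]
    rw [h1, h2, intervalIntegral.integral_comp_sub_left (fun u => 1 / (2 * u)) x₂,
      intervalIntegral.integral_comp_sub_right (fun u => 1 / (2 * u)) x₁]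
    have e1 : x₂ - m = d / 2 := by rw [hm_def, hd_def]; ring
    have e2 : x₂ - a = 1 / 2 := by rw [ha_def]; ring
    have e3 : m - x₁ = d / 2 := by rw [hm_def, hd_def]; ring
    have e4 : b - x₁ = 1 / 2 := by rw [hb_def]; ring
    rw [e1, e2, e3, e4, core]
    ring
  have habs : |x₁ - x₂| = d := by
    rw [abs_sub_comm]; exact abs_of_nonneg hd.le
  rw [step1, step2]
  simp_rw [step3]
  rw [step4, hval, habs, min_eq_left hle]

/-- For all real numbers `x₁ ≠ x₂`, the hyperbolic measure of the intersection of the two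
horizontal translates of `U` satisfies
`λ((U + x₁) ∩ (U + x₂)) = ln(1 / min(|x₁ − x₂|, 1))`. -/
theorem hypMeasure_inter_htrans_coneU (x₁ x₂ : ℝ) (h : x₁ ≠ x₂) :
    hypMeasure (htrans coneU x₁ ∩ htrans coneU x₂) =
      ENNReal.ofReal (Real.log (1 / min |x₁ - x₂| 1)) := by
  -- case of distance > 1 : both sides vanish
  by_cases hbig : 1 < |x₁ - x₂|
  · have hempty : htrans coneU x₁ ∩ htrans coneU x₂ = ∅ := by
      rw [Set.eq_empty_iff_forall_notMem]
      rintro p ⟨h1, h2⟩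
      rw [mem_htrans_coneU] at h1 h2
      have t1 := abs_le.mp h1.1
      have t2 := abs_le.mp h2.1
      rcases abs_cases (x₁ - x₂) with ⟨e, _⟩ | ⟨e, _⟩ <;>
        · rw [e] at hbig; cases t1; cases t2; linarith
    rw [hempty, min_eq_right hbig.le]
    simp
  · push_neg at hbig
    rcases lt_trichotomy x₁ x₂ with hlt | heq | hgt
    · exact key_lt x₁ x₂ hlt (by rcases abs_cases (x₁ - x₂) with ⟨e, _⟩ | ⟨e, _⟩ <;>
        rw [e] at hbig <;> linarith)
    · exact absurd heq h
    · rw [Set.inter_comm, abs_sub_comm]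
      exact key_lt x₂ x₁ hgt (by rcases abs_cases (x₁ - x₂) with ⟨e, _⟩ | ⟨e, _⟩ <;>
        rw [e] at hbig <;> linarith)
end

section
/- For every real β with 0 < β ≤ 0.00596, one has (√β − 1)² > (100/99)·( (1/2 + 4β/(β+1)²)·(1+β) + √32·√( β·(1/2 + 4β/(β+1)²) ) ). -/
/-- For every real `β` with `0 < β ≤ 0.00596`, one has
`(√β − 1)² > (100/99)·((1/2 + 4β/(β+1)²)·(1+β) + √32·√(β·(1/2 + 4β/(β+1)²)))`. -/
theorem borel_cantelli_parameter_constraint (β : ℝ) (hβ0 : 0 < β) (hβ : β ≤ 0.00596) :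
    (Real.sqrt β - 1) ^ 2 >
      (100 / 99) * ((1 / 2 + 4 * β / (β + 1) ^ 2) * (1 + β) +
        Real.sqrt 32 * Real.sqrt (β * (1 / 2 + 4 * β / (β + 1) ^ 2))) := by
  have hden : (0:ℝ) < (β + 1) ^ 2 := by positivity
  -- bound Q
  have hQle : 4 * β / (β + 1) ^ 2 ≤ 0.02356 := by
    rw [div_le_iff₀ hden]; nlinarith
  have hQ0 : (0:ℝ) ≤ 1 / 2 + 4 * β / (β + 1) ^ 2 := by positivity
  have hQ : 1 / 2 + 4 * β / (β + 1) ^ 2 ≤ 0.52356 := by linarith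
  -- bound √β
  have hs : Real.sqrt β ≤ 0.077202 := by
    have h1 : β ≤ (0.077202:ℝ) ^ 2 := by nlinarith
    have := Real.sqrt_le_sqrt h1
    rwa [Real.sqrt_sq (by norm_num)] at this
  have hs0 : 0 ≤ Real.sqrt β := Real.sqrt_nonneg β
  -- bound √32
  have h32 : Real.sqrt 32 ≤ 5.65686 := by
    have h1 : (32:ℝ) ≤ (5.65686:ℝ) ^ 2 := by norm_num
    have := Real.sqrt_le_sqrt h1
    rwa [Real.sqrt_sq (by norm_num)] at this
  have h320 : 0 ≤ Real.sqrt 32 := Real.sqrt_nonneg 32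
  -- bound √(βQ)
  have hbq : Real.sqrt (β * (1 / 2 + 4 * β / (β + 1) ^ 2)) ≤ 0.055861 := by
    have h1 : β * (1 / 2 + 4 * β / (β + 1) ^ 2) ≤ (0.055861:ℝ) ^ 2 := by
      have := mul_le_mul hβ hQ hQ0 (by norm_num : (0:ℝ) ≤ 0.00596)
      nlinarith
    have := Real.sqrt_le_sqrt h1
    rwa [Real.sqrt_sq (by norm_num)] at this
  have hbq0 : 0 ≤ Real.sqrt (β * (1 / 2 + 4 * β / (β + 1) ^ 2)) := Real.sqrt_nonneg _
  have hprod : Real.sqrt 32 * Real.sqrt (β * (1 / 2 + 4 * β / (β + 1) ^ 2))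
      ≤ 5.65686 * 0.055861 := mul_le_mul h32 hbq hbq0 (by norm_num)
  have hQb : (1 / 2 + 4 * β / (β + 1) ^ 2) * (1 + β) ≤ 0.52356 * 1.00596 :=
    mul_le_mul hQ (by linarith) (by linarith) (by norm_num)
  nlinarith [mul_nonneg (sub_nonneg.mpr hs) (show (0:ℝ) ≤ 2 - Real.sqrt β - 0.077202 by linarith)]
end

section
/- For every real β with 0 < β ≤ 0.0424, one has (√β − 1)² > (100/99)·( (4β/(β+1)²)·(1+β) + √32·√( β·(4β/(β+1)²) ) ). -/
/-- For every real `β` with `0 < β ≤ 0.0424`, one has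
`(√β − 1)² > (100/99)·((4β/(β+1)²)·(1+β) + √32·√(β·(4β/(β+1)²)))`. -/
theorem borel_cantelli_parameter_constraint_small_cidb (β : ℝ) (hβ0 : 0 < β)
    (hβ : β ≤ 0.0424) :
    (Real.sqrt β - 1) ^ 2 >
      (100 / 99) * ((4 * β / (β + 1) ^ 2) * (1 + β) +
        Real.sqrt 32 * Real.sqrt (β * (4 * β / (β + 1) ^ 2))) := by
  have hb1 : (0:ℝ) < β + 1 := by linarith
  have e1 : 4 * β / (β + 1) ^ 2 * (1 + β) = 4 * β / (β + 1) := by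
    field_simp; ring
  have e2 : Real.sqrt (β * (4 * β / (β + 1) ^ 2)) = 2 * β / (β + 1) := by
    have : β * (4 * β / (β + 1) ^ 2) = (2 * β / (β + 1)) ^ 2 := by
      field_simp; ring
    rw [this, Real.sqrt_sq (by positivity)]
  have h32 : Real.sqrt 32 < 5.65686 := by
    rw [show (5.65686:ℝ) = Real.sqrt (5.65686^2) from (Real.sqrt_sq (by norm_num)).symm]
    exact Real.sqrt_lt_sqrt (by norm_num) (by norm_num)
  set s := Real.sqrt β with hs
  have hs0 : 0 ≤ s := Real.sqrt_nonneg β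
  have hs2 : s ^ 2 = β := Real.sq_sqrt hβ0.le
  have h32' : (0:ℝ) ≤ Real.sqrt 32 := Real.sqrt_nonneg _
  have hβpos : 0 < 2 * β / (β + 1) := by positivity
  rw [e1, e2, gt_iff_lt]
  have h1 : Real.sqrt 32 * (2 * β / (β + 1)) < 5.65686 * (2 * β / (β + 1)) :=
    mul_lt_mul_of_pos_right h32 hβpos
  have h2 : 100 / 99 * (4 * β / (β + 1) + 5.65686 * (2 * β / (β + 1))) < (s - 1) ^ 2 := by
    have e3 : 100 / 99 * (4 * β / (β + 1) + 5.65686 * (2 * β / (β + 1)))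
        = (100 / 99 * (4 + 2 * 5.65686) * β) / (β + 1) := by
      field_simp
    rw [e3, div_lt_iff₀ hb1]
    nlinarith [sq_nonneg (s - 0.2059), sq_nonneg s, sq_nonneg (s*s - 0.0424),
      mul_pos hβ0 hb1, sq_nonneg (s-1)]
  have h3 : 100 / 99 * (4 * β / (β + 1) + Real.sqrt 32 * (2 * β / (β + 1)))
      < 100 / 99 * (4 * β / (β + 1) + 5.65686 * (2 * β / (β + 1))) := by linarith
  linarith [sq_nonneg (s - 0.2059), sq_nonneg s, sq_nonneg (s*s - 0.0424),
    mul_pos hβ0 hb1, sq_nonneg (s-1)]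
end

section
/- Let λ ∈ (0,1) and 0 < ε ≤ δ. Define, for r ≥ 0, R_ε^δ(r) := ln(δ/ε) − (1/ε − 1/δ)·r if r ≤ ε; R_ε^δ(r) := ln(δ/r) + r/δ − 1 if ε ≤ r ≤ δ; and R_ε^δ(r) := 0 if r ≥ δ. Also define R_ε^{δ,λ}(r) := ln(δ/ε) − (1/ε − 1/δ)·r + (1−λ)·(1 − r/δ) if r ≤ ε; R_ε^{δ,λ}(r) := ln(δ/r) − 1 + r/δ + (1−λ)·(1 − r/δ) if ε ≤ r ≤ δ/λ; and R_ε^{δ,λ}(r) := 0 if r ≥ δ/λ. Then for every r with 0 ≤ r ≤ δ/λ, one has R_{λε}^δ(λ·r) = (ln(1/λ) − 1 + λ) + R_ε^{δ,λ}(r). -/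
/-- The piecewise covariance function `R_ε^δ` of the truncated logarithmic field. -/
noncomputable def Rcov (ε δ r : ℝ) : ℝ :=
  if r ≤ ε then Real.log (δ / ε) - (1 / ε - 1 / δ) * r
  else if r ≤ δ then Real.log (δ / r) + r / δ - 1
  else 0

/-- The piecewise covariance function `R_ε^{δ,λ}` of the auxiliary scaled field. -/
noncomputable def RcovScaled (lam ε δ r : ℝ) : ℝ :=
  if r ≤ ε then Real.log (δ / ε) - (1 / ε - 1 / δ) * r + (1 - lam) * (1 - r / δ)
  else if r ≤ δ / lam then Real.log (δ / r) - 1 + r / δ + (1 - lam) * (1 - r / δ)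
  else 0

/-- For `λ ∈ (0,1)`, `0 < ε ≤ δ` and every `0 ≤ r ≤ δ/λ`, one has
`R_{λε}^δ(λ·r) = (ln(1/λ) − 1 + λ) + R_ε^{δ,λ}(r)`. -/
theorem Rcov_scaling_identity (lam ε δ : ℝ) (hlam0 : 0 < lam) (hlam1 : lam < 1)
    (hε : 0 < ε) (hεδ : ε ≤ δ) :
    ∀ r : ℝ, 0 ≤ r → r ≤ δ / lam →
      Rcov (lam * ε) δ (lam * r) =
        (Real.log (1 / lam) - 1 + lam) + RcovScaled lam ε δ r := by
  intro r hr0 hrδ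
  have hδ : 0 < δ := lt_of_lt_of_le hε hεδ
  have hlamne : lam ≠ 0 := ne_of_gt hlam0
  by_cases h : r ≤ ε
  · have h' : lam * r ≤ lam * ε := by nlinarith
    simp only [Rcov, RcovScaled, h, h', if_pos]
    have hlog : Real.log (δ / (lam * ε)) = Real.log (1 / lam) + Real.log (δ / ε) := by
      rw [show δ / (lam * ε) = (1 / lam) * (δ / ε) by field_simp,
        Real.log_mul (by positivity) (by positivity)]
    rw [hlog]
    field_simp
    ring
  · push_neg at h
    have h' : ¬ (lam * r ≤ lam * ε) := by push_neg; nlinarith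
    have hrpos : 0 < r := lt_trans hε h
    have h2 : lam * r ≤ δ := by
      rw [le_div_iff₀ hlam0] at hrδ; linarith [hrδ]
    have h3 : r ≤ δ / lam := hrδ
    simp only [Rcov, RcovScaled, if_neg h', if_neg (not_le.mpr h), if_pos h2, if_pos h3]
    have hlog : Real.log (δ / (lam * r)) = Real.log (1 / lam) + Real.log (δ / r) := by
      rw [show δ / (lam * r) = (1 / lam) * (δ / r) by field_simp,
        Real.log_mul (by positivity) (by positivity)]
    rw [hlog]
    field_simp
    ring
end
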